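/- arXiv:2009.06839 — 6 statements merged into one kernel-verified Lean document; each statement's English description precedes it below -/
import Mathlib

section
/- Let N ≥ 1, k ≥ 1, ℓ ∈ ℝ^N, p ∈ ℂ. Let u₂, …, u_{N+k} ∈ ℂ be pairwise distinct and v₁, …, v_k ∈ ℂ be pairwise distinct, such that u_i ≠ v_j for all 2 ≤ i ≤ N+k and 1 ≤ j ≤ k, and v₁ ∉ {u₂, …, u_{N+k}}. Then, in the punctured limit u₁ → v₁ (u₁ ≠ v₁), the supersymmetric Bessel lift 𝓑_{ℓ,p}(u₁, u₂, …, u_{N+k} / v₁, …, v_k) converges to 𝓑_{ℓ,p}(u₂, …, u_{N+k} / v₂, …, v_k), where for k = 1 the limit is interpreted as the multivariate Bessel function 𝓑_ℓ(u₂, …, u_{N+1}). -/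
open Complex Finset Filter Topology

noncomputable section

/-- Vandermonde product `Δ(w) = ∏_{i<j} (w i - w j)`. -/
def vprod {m : ℕ} (w : Fin m → ℂ) : ℂ :=
  ∏ i : Fin m, ∏ j : Fin m, if i < j then w i - w j else 1

/-- `D(x;y) = ∏_{i,j} (x i + y j)`. -/
def dprod {m n : ℕ} (x : Fin m → ℂ) (y : Fin n → ℂ) : ℂ :=
  ∏ i : Fin m, ∏ j : Fin n, (x i + y j)

/-- The `(N+k) × (N+k)` matrix `(E_p(u;v) | A_ℓ(u))`: the first `k` columns have entries
`e^{p (u_i - v_j)}/(u_i - v_j)` and the last `N` columns have entries `e^{u_i ℓ_j}`. -/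
def besselLiftMatrix (N k : ℕ) (l : Fin N → ℝ) (p : ℂ)
    (u : Fin (N + k) → ℂ) (v : Fin k → ℂ) :
    Matrix (Fin (N + k)) (Fin (N + k)) ℂ :=
  Matrix.of fun i j =>
    if h : (j : ℕ) < k then Complex.exp (p * (u i - v ⟨j, h⟩)) / (u i - v ⟨j, h⟩)
    else Complex.exp (u i * (l ⟨(j : ℕ) - k, by have := j.isLt; omega⟩ : ℂ))

/-- The supersymmetric lift `𝓑_{ℓ,p}(u / v)` of the multivariate Bessel function:
`(-1)^{Nk} · D(u;-v)/(Δ(u)Δ(-v)) · det(E_p(u;v) | A_ℓ(u))`.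
For `k = 0` this is the multivariate Bessel function `𝓑_ℓ(u)`. -/
def besselLift (N k : ℕ) (l : Fin N → ℝ) (p : ℂ)
    (u : Fin (N + k) → ℂ) (v : Fin k → ℂ) : ℂ :=
  (-1 : ℂ) ^ (N * k) * dprod u (fun j => -v j) /
      (vprod u * vprod fun j => -v j) *
    (besselLiftMatrix N k l p u v).det

/-!
Multiplying the first row of `(E_p(z, u; v) | A_ℓ(z, u))` by `z - v₀` multiplies its determinant
by `z - v₀` and removes the pole of the `(0, 0)` entry; as `z → v₀` this row tends to
`(1, 0, …, 0)`, since its other entries are continuous at `v₀`. The determinant therefore tends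
to the minor with the first row and column deleted, which is the matrix of the smaller lift.
The factor `z - v₀` is supplied by `D(z, u; -v)`; what remains of the prefactor is continuous at
`v₀`, and there it equals the prefactor of the smaller lift: the new factors of `D(u; -v)` and
`Δ(-v)` cancel against those of `Δ(v₀, u)` and `∏ⱼ (v₀ - vⱼ)` up to the signs `(-1)^{N+k}` and
`(-1)^k`, which turn `(-1)^{N(k+1)}` into `(-1)^{Nk}`.
-/

namespace Matrix

theorem det_updateRow_zero_single_one {R : Type*} [CommRing R] {n : ℕ}
    (A : Matrix (Fin (n + 1)) (Fin (n + 1)) R) :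
    (A.updateRow 0 (Pi.single 0 1)).det = (A.submatrix Fin.succ Fin.succ).det := by
  rw [← adjugate_apply, adjugate_fin_succ_eq_det_submatrix]
  simp [Fin.succAbove_zero]

theorem tendsto_mul_det_of_tendsto_smul_row {R : Type*} [CommRing R] [TopologicalSpace R]
    [IsTopologicalRing R] {n : Type*} [Fintype n] [DecidableEq n] {α : Type*} {F : Filter α}
    {A : α → Matrix n n R} {B : Matrix n n R} {i : n} {f : α → R}
    (hrow : Tendsto (fun z => f z • A z i) F (𝓝 (B i)))
    (hother : ∀ z, ∀ i' ≠ i, A z i' = B i') :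
    Tendsto (fun z => f z * (A z).det) F (𝓝 B.det) := by
  have hA : ∀ z, f z * (A z).det = (B.updateRow i (f z • A z i)).det := by
    intro z
    have hAz : A z = B.updateRow i (A z i) := by
      ext i' j
      by_cases h : i' = i
      · subst h; simp
      · simp [updateRow_ne h, hother z i' h]
    rw [det_updateRow_smul, ← hAz]
  have hcont : Continuous fun r : n → R => (B.updateRow i r).det :=
    (continuous_const.matrix_updateRow i continuous_id).matrix_det
  simp only [hA]
  have h := (hcont.tendsto (B i)).comp hrow
  rwa [updateRow_eq_self] at h

end Matrix

theorem prod_sub_comm {R : Type*} [CommRing R] {n : ℕ} (a b : Fin n → R) :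
    ∏ i, (a i - b i) = (-1) ^ n * ∏ i, (b i - a i) := by
  simp_rw [← neg_sub (b _), Finset.prod_neg, Finset.card_univ, Fintype.card_fin]

theorem vprod_cons {m : ℕ} (z : ℂ) (w : Fin m → ℂ) :
    vprod (Fin.cons z w) = (∏ i, (z - w i)) * vprod w := by
  simp only [vprod, Fin.prod_univ_succ, Fin.cons_zero, Fin.cons_succ, if_false, Fin.succ_pos,
    if_true, Fin.succ_lt_succ_iff, one_mul, Fin.not_lt_zero]

theorem vprod_ne_zero {m : ℕ} {w : Fin m → ℂ} (hw : Function.Injective w) : vprod w ≠ 0 :=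
  prod_ne_zero_iff.2 fun i _ => prod_ne_zero_iff.2 fun j _ => by
    split_ifs with h
    · exact sub_ne_zero.2 (hw.ne h.ne)
    · exact one_ne_zero

theorem dprod_cons_left {m n : ℕ} (z : ℂ) (x : Fin m → ℂ) (y : Fin n → ℂ) :
    dprod (Fin.cons z x) y = (∏ j, (z + y j)) * dprod x y := by
  simp only [dprod, Fin.prod_univ_succ, Fin.cons_zero, Fin.cons_succ]

theorem dprod_cons_right {m n : ℕ} (x : Fin m → ℂ) (w : ℂ) (y : Fin n → ℂ) :
    dprod x (Fin.cons w y) = (∏ i, (x i + w)) * dprod x y := by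
  simp only [dprod, Fin.prod_univ_succ, Fin.cons_zero, Fin.cons_succ, prod_mul_distrib]

theorem besselLiftMatrix_row_eq {N k : ℕ} (l : Fin N → ℝ) (p : ℂ) {u u' : Fin (N + k) → ℂ}
    (v : Fin k → ℂ) {i i' : Fin (N + k)} (h : u i = u' i') :
    besselLiftMatrix N k l p u v i = besselLiftMatrix N k l p u' v i' := by
  ext j
  simp [besselLiftMatrix, h]

theorem besselLiftMatrix_cons_submatrix_succ {N k : ℕ} (l : Fin N → ℝ) (p z : ℂ)
    (u : Fin (N + k) → ℂ) (v : Fin (k + 1) → ℂ) :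
    (besselLiftMatrix N (k + 1) l p (Fin.cons z u) v).submatrix Fin.succ Fin.succ =
      besselLiftMatrix N k l p u (Fin.tail v) := by
  ext i j
  simp only [besselLiftMatrix, Matrix.submatrix_apply, Matrix.of_apply, Fin.cons_succ,
    Fin.val_succ, Nat.add_lt_add_iff_right, Nat.add_sub_add_right]
  rfl

theorem continuousAt_besselLiftMatrix_cons_zero {N k : ℕ} (l : Fin N → ℝ) (p : ℂ)
    (u : Fin (N + k) → ℂ) (v : Fin (k + 1) → ℂ) {z₀ : ℂ} (j : Fin (N + k + 1))
    (hj : ∀ h : (j : ℕ) < k + 1, z₀ ≠ v ⟨j, h⟩) :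
    ContinuousAt (fun z => besselLiftMatrix N (k + 1) l p (Fin.cons z u) v 0 j) z₀ := by
  simp only [besselLiftMatrix, Matrix.of_apply, Fin.cons_zero]
  split_ifs with h
  · exact ContinuousAt.div (by fun_prop) (by fun_prop) (sub_ne_zero.2 (hj h))
  · fun_prop

theorem tendsto_sub_smul_besselLiftMatrix_cons_zero {N k : ℕ} (l : Fin N → ℝ) (p : ℂ)
    (u : Fin (N + k) → ℂ) {v : Fin (k + 1) → ℂ} (hv : Function.Injective v) :
    Tendsto (fun z => (z - v 0) • besselLiftMatrix N (k + 1) l p (Fin.cons z u) v 0)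
      (𝓝[≠] v 0) (𝓝 (Pi.single 0 1)) := by
  rw [tendsto_pi_nhds]
  intro j
  rcases Fin.eq_zero_or_eq_succ j with rfl | ⟨j, rfl⟩
  · have hpole : ∀ z ≠ v 0,
        exp (p * (z - v 0)) = (z - v 0) * besselLiftMatrix N (k + 1) l p (Fin.cons z u) v 0 0 := by
      intro z hz
      simp [besselLiftMatrix, mul_div_cancel₀ _ (sub_ne_zero.2 hz)]
    have hexp : Tendsto (fun z => exp (p * (z - v 0))) (𝓝[≠] v 0) (𝓝 1) := by
      have hcont : Continuous fun z => exp (p * (z - v 0)) := by fun_prop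
      simpa using (hcont.tendsto (v 0)).mono_left nhdsWithin_le_nhds
    simp only [Pi.smul_apply, smul_eq_mul, Pi.single_eq_same]
    exact hexp.congr' (eventually_nhdsWithin_of_forall hpole)
  · have hcont := continuousAt_besselLiftMatrix_cons_zero l p u v (z₀ := v 0) j.succ
      fun _ heq => by simpa using congrArg Fin.val (hv heq)
    have hzero : ContinuousAt
        (fun z => (z - v 0) * besselLiftMatrix N (k + 1) l p (Fin.cons z u) v 0 j.succ) (v 0) :=
      (continuousAt_id.sub continuousAt_const).mul hcont
    simpa using hzero.tendsto.mono_left nhdsWithin_le_nhds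

theorem tendsto_sub_mul_det_besselLiftMatrix_cons {N k : ℕ} (l : Fin N → ℝ) (p : ℂ)
    (u : Fin (N + k) → ℂ) {v : Fin (k + 1) → ℂ} (hv : Function.Injective v) :
    Tendsto (fun z => (z - v 0) * (besselLiftMatrix N (k + 1) l p (Fin.cons z u) v).det)
      (𝓝[≠] v 0) (𝓝 (besselLiftMatrix N k l p u (Fin.tail v)).det) := by
  set B := (besselLiftMatrix N (k + 1) l p (Fin.cons (v 0) u) v).updateRow 0 (Pi.single 0 1)
  have hB : B.det = (besselLiftMatrix N k l p u (Fin.tail v)).det := by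
    rw [Matrix.det_updateRow_zero_single_one, besselLiftMatrix_cons_submatrix_succ]
  rw [← hB]
  refine Matrix.tendsto_mul_det_of_tendsto_smul_row (i := 0) ?_ fun z i hi => ?_
  · simpa [B] using tendsto_sub_smul_besselLiftMatrix_cons_zero l p u hv
  · obtain ⟨i, rfl⟩ := Fin.exists_succ_eq.2 hi
    simp only [B, Matrix.updateRow_ne hi]
    exact besselLiftMatrix_row_eq l p v rfl

section ReducedPrefactor

variable {N k : ℕ} (u : Fin (N + k) → ℂ) (v : Fin (k + 1) → ℂ)

/-- The prefactor of `𝓑_{ℓ,p}(z, u / v)` with the simple zero `z - v₀` of `D(z, u; -v)` divided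
out. -/
def besselLiftReducedPrefactor (z : ℂ) : ℂ :=
  (-1) ^ (N * (k + 1)) * (∏ j : Fin k, (z - v j.succ)) * dprod u (fun j => -v j) /
    (vprod (Fin.cons z u) * vprod fun j => -v j)

theorem besselLift_cons_eq (l : Fin N → ℝ) (p z : ℂ) :
    besselLift N (k + 1) l p (Fin.cons z u) v = besselLiftReducedPrefactor u v z *
      ((z - v 0) * (besselLiftMatrix N (k + 1) l p (Fin.cons z u) v).det) := by
  simp only [besselLift, besselLiftReducedPrefactor, dprod_cons_left, Fin.prod_univ_succ,
    ← sub_eq_add_neg]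
  ring

variable {u v}

theorem continuousAt_besselLiftReducedPrefactor (hu : Function.Injective u)
    (hv : Function.Injective v) (huv : ∀ i j, u i ≠ v j) :
    ContinuousAt (besselLiftReducedPrefactor u v) (v 0) := by
  have hden : vprod (Fin.cons (v 0) u) * vprod (fun j => -v j) ≠ 0 := by
    refine mul_ne_zero ?_ (vprod_ne_zero (neg_injective.comp hv))
    rw [vprod_cons]
    exact mul_ne_zero (prod_ne_zero_iff.2 fun i _ => sub_ne_zero.2 (huv i 0).symm)
      (vprod_ne_zero hu)
  unfold besselLiftReducedPrefactor
  refine ContinuousAt.div (by fun_prop) ?_ hden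
  simp only [vprod_cons]
  fun_prop

theorem besselLiftReducedPrefactor_mul_det (l : Fin N → ℝ) (p : ℂ) (hu : Function.Injective u)
    (hv : Function.Injective v) (huv : ∀ i j, u i ≠ v j) :
    besselLiftReducedPrefactor u v (v 0) * (besselLiftMatrix N k l p u (Fin.tail v)).det =
      besselLift N k l p u (Fin.tail v) := by
  have hvs : ∏ j : Fin k, (v j.succ - v 0) ≠ 0 :=
    prod_ne_zero_iff.2 fun j _ => sub_ne_zero.2 (hv.ne (Fin.succ_ne_zero j))
  have huv0 : ∏ i, (v 0 - u i) ≠ 0 := prod_ne_zero_iff.2 fun i _ => sub_ne_zero.2 (huv i 0).symm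
  have hVu := vprod_ne_zero hu
  have hVv := vprod_ne_zero (neg_injective.comp (hv.comp (Fin.succ_injective k)))
  have hneg : (fun j => -v j) = Fin.cons (-v 0) (fun j : Fin k => -v j.succ) :=
    (Fin.cons_self_tail _).symm
  simp only [besselLiftReducedPrefactor, besselLift, hneg, dprod_cons_right, vprod_cons,
    ← sub_eq_add_neg, neg_sub_neg, Fin.tail]
  have hsign : (-1 : ℂ) ^ (N * (k + 1)) * (-1) ^ k * (-1) ^ (N + k) = (-1) ^ (N * k) := by
    rw [← pow_add, ← pow_add, show N * (k + 1) + k + (N + k) = N * k + 2 * (N + k) by ring,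
      pow_add, pow_mul]
    norm_num
  have hu0 : ∏ i, (u i - v 0) = (-1) ^ (N + k) * ∏ i, (v 0 - u i) := prod_sub_comm _ _
  have hv0 : ∏ j : Fin k, (v 0 - v j.succ) = (-1) ^ k * ∏ j : Fin k, (v j.succ - v 0) :=
    prod_sub_comm _ _
  rw [hu0, hv0, ← hsign]
  field_simp

end ReducedPrefactor

theorem statement0_general (N k : ℕ) (l : Fin N → ℝ) (p : ℂ)
    (u : Fin (N + k) → ℂ) (v : Fin (k + 1) → ℂ)
    (hu : Function.Injective u) (hv : Function.Injective v)
    (huv : ∀ (i : Fin (N + k)) (j : Fin (k + 1)), u i ≠ v j) :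
    Tendsto (fun z : ℂ => besselLift N (k + 1) l p (Fin.cons z u) v)
      (𝓝[≠] (v 0)) (𝓝 (besselLift N k l p u (Fin.tail v))) := by
  have hprefactor := (continuousAt_besselLiftReducedPrefactor hu hv huv).tendsto.mono_left
    (nhdsWithin_le_nhds (s := {v 0}ᶜ))
  have hdet := tendsto_sub_mul_det_besselLiftMatrix_cons l p u hv
  rw [← besselLiftReducedPrefactor_mul_det l p hu hv huv]
  simpa only [besselLift_cons_eq] using hprefactor.mul hdet

/-- In the punctured limit `u₁ → v₁`, the supersymmetric Bessel lift
`𝓑_{ℓ,p}(u₁, u₂, …, u_{N+k} / v₁, …, v_k)` converges to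
`𝓑_{ℓ,p}(u₂, …, u_{N+k} / v₂, …, v_k)` (which, for `k = 1`, is the multivariate
Bessel function `𝓑_ℓ(u₂, …, u_{N+1})`).  Here the number of dual variables is `k + 1 ≥ 1`. -/
theorem statement0 (N k : ℕ) (hN : 1 ≤ N) (l : Fin N → ℝ) (p : ℂ)
    (u : Fin (N + k) → ℂ) (v : Fin (k + 1) → ℂ)
    (hu : Function.Injective u) (hv : Function.Injective v)
    (huv : ∀ (i : Fin (N + k)) (j : Fin (k + 1)), u i ≠ v j) :
    Tendsto (fun z : ℂ => besselLift N (k + 1) l p (Fin.cons z u) v)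
      (𝓝[≠] (v 0)) (𝓝 (besselLift N k l p u (Fin.tail v))) :=
  statement0_general N k l p u v hu hv huv
end
end

section
/- Let N ≥ 1, ℓ ∈ ℝ^N, p ∈ ℂ. Let ξ = (ξ₁, …, ξ_N) ∈ ℂ^N have pairwise distinct entries with det A_ℓ(ξ) ≠ 0, and let u, v ∈ ℂ ∖ {ξ₁, …, ξ_N} with u ≠ v. Then 𝓑_{ℓ,p}(u, ξ₁, …, ξ_N / v) / 𝓑_ℓ(ξ) = (u − v) · ∏_{i=1}^N ((v − ξ_i)/(u − ξ_i)) · ( e^{p(u − v)}/(u − v) + a(u)ᵀ A_ℓ(ξ)^{−1} b(v) ), where a(u) := (e^{ℓ_1 u}, …, e^{ℓ_N u}) ∈ ℂ^N and b(v) := (e^{p(ξ_1 − v)}/(v − ξ_1), …, e^{p(ξ_N − v)}/(v − ξ_N)) ∈ ℂ^N. -/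
open Complex Finset Filter Topology

noncomputable section

/-- The multivariate Bessel function `𝓑_ℓ(w) = det(e^{w_i ℓ_j}) / Δ(w)`. -/
def besselFun (N : ℕ) (l : Fin N → ℝ) (w : Fin N → ℂ) : ℂ :=
  (Matrix.of fun i j : Fin N => Complex.exp (w i * (l j : ℂ))).det / vprod w

/-- The concatenation `(u, ξ₁, …, ξ_N)` as a vector indexed by `Fin (N + 1)`. -/
def catUX {N k : ℕ} (u : Fin k → ℂ) (ξ : Fin N → ℂ) : Fin (N + k) → ℂ :=
  fun i => if h : (i : ℕ) < k then u ⟨i, h⟩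
    else ξ ⟨(i : ℕ) - k, by have := i.isLt; omega⟩


/-! After moving `u` to the front, the lift matrix for `k = 1` is the block matrix
`[[e^{p(u-v)}/(u-v), a(u)ᵀ], [-b(v), A_ℓ(ξ)]]`, whose determinant is
`det A_ℓ(ξ) · (e^{p(u-v)}/(u-v) + a(u)ᵀ A_ℓ(ξ)⁻¹ b(v))` by the Schur complement formula.
The prefactor splits as `Δ(u, ξ) = ∏ (u - ξ_i) · Δ(ξ)` and `(-1)^N D(u, ξ; -v) = (u - v) ∏ (v - ξ_i)`,
and dividing by `𝓑_ℓ(ξ)` cancels `det A_ℓ(ξ)` and `Δ(ξ)`. -/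

open Matrix

namespace Matrix

variable {m ι α : Type*} [Fintype m] [DecidableEq m] [Fintype ι] [DecidableEq ι] [Unique ι]
  [CommRing α]

theorem det_fromBlocks_replicate₂₂ (a : α) (b c : m → α) {D : Matrix m m α}
    (hD : IsUnit D.det) :
    (fromBlocks (of fun _ _ : ι => a) (replicateRow ι b) (replicateCol ι c) D).det =
      D.det * (a - b ⬝ᵥ D⁻¹ *ᵥ c) := by
  let := D.invertibleOfIsUnitDet hD
  rw [det_fromBlocks₂₂, invOf_eq_nonsing_inv, Matrix.mul_assoc, ← replicateCol_mulVec]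
  congr 1
  rw [det_unique]
  rfl

end Matrix

lemma vprod_cons_s4 {N : ℕ} (u : ℂ) (ξ : Fin N → ℂ) :
    vprod (Fin.cons u ξ) = (∏ j, (u - ξ j)) * vprod ξ := by
  simp [vprod, Fin.prod_univ_succ, Fin.succ_pos]

lemma vprod_fin_one (w : Fin 1 → ℂ) : vprod w = 1 := by
  simp [vprod]

lemma vprod_ne_zero_s4 {N : ℕ} {ξ : Fin N → ℂ} (hξ : Function.Injective ξ) : vprod ξ ≠ 0 :=
  Finset.prod_ne_zero_iff.mpr fun i _ => Finset.prod_ne_zero_iff.mpr fun j _ => by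
    split_ifs with hij
    · exact sub_ne_zero.mpr (hξ.ne hij.ne)
    · exact one_ne_zero

lemma dprod_fin_one {m : ℕ} (x : Fin m → ℂ) (c : ℂ) :
    dprod x (fun _ : Fin 1 => c) = ∏ i, (x i + c) := by
  simp [dprod]

lemma catUX_fin_one {N : ℕ} (u : Fin 1 → ℂ) (ξ : Fin N → ℂ) :
    catUX u ξ = Fin.cons (u 0) ξ := by
  funext i
  induction i using Fin.cases <;> simp [catUX]

def finOneSumEquiv (N : ℕ) : Fin 1 ⊕ Fin N ≃ Fin (N + 1) where
  toFun := Sum.elim (fun _ => 0) Fin.succ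
  invFun := Fin.cases (Sum.inl 0) Sum.inr
  left_inv
    | .inl x => by simp [Subsingleton.elim x 0]
    | .inr x => by simp
  right_inv i := by induction i using Fin.cases <;> simp

section BesselLift

variable {N : ℕ} (l : Fin N → ℝ) (p u v : ℂ) (ξ : Fin N → ℂ)

lemma besselLiftMatrix_cons_submatrix :
    (besselLiftMatrix N 1 l p (Fin.cons u ξ) fun _ => v).submatrix
        (finOneSumEquiv N) (finOneSumEquiv N) =
      fromBlocks (of fun _ _ : Fin 1 => exp (p * (u - v)) / (u - v))
        (replicateRow (Fin 1) fun j => exp (l j * u))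
        (replicateCol (Fin 1) (-fun i => exp (p * (ξ i - v)) / (v - ξ i)))
        (of fun i j => exp (ξ i * l j)) := by
  ext (i | i) (j | j) <;>
    simp [besselLiftMatrix, finOneSumEquiv, mul_comm, ← div_neg]

lemma det_besselLiftMatrix_cons
    (hdet : (of fun i j : Fin N => exp (ξ i * l j)).det ≠ 0) :
    (besselLiftMatrix N 1 l p (Fin.cons u ξ) fun _ => v).det =
      (of fun i j : Fin N => exp (ξ i * l j)).det *
        (exp (p * (u - v)) / (u - v) +
          (fun i => exp (l i * u)) ⬝ᵥ
            (of fun i j : Fin N => exp (ξ i * l j))⁻¹ *ᵥ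
              fun i => exp (p * (ξ i - v)) / (v - ξ i)) := by
  rw [← det_submatrix_equiv_self (finOneSumEquiv N), besselLiftMatrix_cons_submatrix,
    det_fromBlocks_replicate₂₂ _ _ _ hdet.isUnit, mulVec_neg, dotProduct_neg,
    sub_neg_eq_add]

lemma besselLift_cons :
    besselLift N 1 l p (Fin.cons u ξ) (fun _ => v) =
      (u - v) * (∏ i, (v - ξ i)) / ((∏ i, (u - ξ i)) * vprod ξ) *
        (besselLiftMatrix N 1 l p (Fin.cons u ξ) fun _ => v).det := by
  have hsign : (-1 : ℂ) ^ N * ∏ i, (ξ i - v) = ∏ i, (v - ξ i) := by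
    simpa using (Finset.prod_neg (s := univ) fun i => ξ i - v).symm
  rw [besselLift, dprod_fin_one, vprod_cons_s4, vprod_fin_one, Fin.prod_univ_succ]
  simp only [Fin.cons_zero, Fin.cons_succ, ← sub_eq_add_neg, mul_one, ← hsign]
  ring

end BesselLift

theorem statement4_general (N : ℕ) (l : Fin N → ℝ) (p : ℂ)
    (ξ : Fin N → ℂ) (hξ : Function.Injective ξ)
    (hdet : (Matrix.of fun i j : Fin N => Complex.exp (ξ i * (l j : ℂ))).det ≠ 0)
    (u v : ℂ) :
    besselLift N 1 l p (catUX (fun _ : Fin 1 => u) ξ) (fun _ : Fin 1 => v) /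
        besselFun N l ξ =
      (u - v) * (∏ i : Fin N, (v - ξ i) / (u - ξ i)) *
        (Complex.exp (p * (u - v)) / (u - v) +
          dotProduct (fun i => Complex.exp ((l i : ℂ) * u))
            ((Matrix.of fun i j : Fin N => Complex.exp (ξ i * (l j : ℂ)))⁻¹.mulVec
              fun i => Complex.exp (p * (ξ i - v)) / (v - ξ i))) := by
  rw [catUX_fin_one, besselLift_cons, det_besselLiftMatrix_cons l p u v ξ hdet, besselFun,
    Finset.prod_div_distrib]
  have hΔ := vprod_ne_zero_s4 hξ
  field_simp

/-- Rank-one formula: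
`𝓑_{ℓ,p}(u, ξ₁,…,ξ_N / v)/𝓑_ℓ(ξ)
 = (u-v) ∏_i (v-ξ_i)/(u-ξ_i) · ( e^{p(u-v)}/(u-v) + a(u)ᵀ A_ℓ(ξ)⁻¹ b(v) )`,
where `a(u)_i = e^{ℓ_i u}` and `b(v)_i = e^{p(ξ_i - v)}/(v - ξ_i)`. -/
theorem statement4 (N : ℕ) (hN : 1 ≤ N) (l : Fin N → ℝ) (p : ℂ)
    (ξ : Fin N → ℂ) (hξ : Function.Injective ξ)
    (hdet : (Matrix.of fun i j : Fin N => Complex.exp (ξ i * (l j : ℂ))).det ≠ 0)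
    (u v : ℂ) (huv : u ≠ v) (huξ : ∀ j, u ≠ ξ j) (hvξ : ∀ j, v ≠ ξ j) :
    besselLift N 1 l p (catUX (fun _ : Fin 1 => u) ξ) (fun _ : Fin 1 => v) /
        besselFun N l ξ =
      (u - v) * (∏ i : Fin N, (v - ξ i) / (u - ξ i)) *
        (Complex.exp (p * (u - v)) / (u - v) +
          dotProduct (fun i => Complex.exp ((l i : ℂ) * u))
            ((Matrix.of fun i j : Fin N => Complex.exp (ξ i * (l j : ℂ)))⁻¹.mulVec
              fun i => Complex.exp (p * (ξ i - v)) / (v - ξ i))) :=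
  statement4_general N l p ξ hξ hdet u v
end
end

section
/- Let N ≥ 1, ℓ₁, …, ℓ_N ∈ ℝ, α ∈ ℂ ∖ {0}, u, w ∈ ℂ, and suppose e^{ℓ_1 α}, …, e^{ℓ_N α} are pairwise distinct. Let c₀ ∈ ℂ and R > 0 satisfy: (i) |ℓ_a − c₀| < R for all a; (ii) for every a and every z with |z − c₀| ≤ R, if e^{z α} = e^{ℓ_a α} then z = ℓ_a; (iii) e^{(w − z) α} ≠ 1 for every z with |z − c₀| ≤ R. Then (1/(2πi)) ∮_{|z − c₀| = R} (α/(e^{(w − z)α} − 1)) · e^{z u} · ∏_{i=1}^N ((e^{w α} − e^{ℓ_i α})/(e^{z α} − e^{ℓ_i α})) dz = ∑_{a=1}^N e^{ℓ_a u} ∏_{i ≠ a} ((e^{w α} − e^{ℓ_i α})/(e^{ℓ_a α} − e^{ℓ_i α})), where the circle is traversed once counterclockwise. -/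
/-!
Put `x = e^{zα}` and `Eᵢ = e^{ℓᵢ α}`. As the `Eᵢ` are distinct, Lagrange interpolation gives the
partial fraction expansion of `∏ᵢ (e^{wα} - Eᵢ)/(x - Eᵢ)` in `x`, which splits the integrand into
pieces `f(z)/(e^{zα} - E_a)`, with `f` holomorphic on the closed disc by (iii). By (i) and (ii) the
denominator vanishes on the closed disc only at `ℓ_a`, and simply since `α ≠ 0`, so writing it as
`(z - ℓ_a) q(z)` with `q` holomorphic and zero-free, the Cauchy integral formula evaluates the
piece as `f(ℓ_a)/(α E_a)`.
-/

open Complex Finset Metric Lagrange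

section PartialFractions

variable {F ι : Type*} [Field F] [DecidableEq ι] {s : Finset ι} {v : ι → F} {x : F}

theorem Lagrange.prod_inv_sub_eq_sum_nodalWeight_mul_inv_sub (hvs : Set.InjOn v s)
    (hs : s.Nonempty) (hx : ∀ i ∈ s, x ≠ v i) :
    ∏ i ∈ s, (x - v i)⁻¹ = ∑ i ∈ s, nodalWeight s v i * (x - v i)⁻¹ := by
  have h := eval_interpolate_not_at_node (1 : ι → F) hx
  simp only [interpolate_one hvs hs, Polynomial.eval_one, Pi.one_apply, mul_one, eval_nodal] at h
  rw [prod_inv_distrib, inv_eq_of_mul_eq_one_right h.symm]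

theorem Lagrange.prod_div_sub_eq_sum_div_sub (hvs : Set.InjOn v s) (hs : s.Nonempty)
    (hx : ∀ i ∈ s, x ≠ v i) (y : F) :
    ∏ i ∈ s, (y - v i) / (x - v i) =
      ∑ a ∈ s, (y - v a) * (∏ i ∈ s.erase a, (y - v i) / (v a - v i)) / (x - v a) := by
  simp only [div_eq_mul_inv, prod_mul_distrib, mul_sum,
    prod_inv_sub_eq_sum_nodalWeight_mul_inv_sub hvs hs hx]
  refine sum_congr rfl fun a ha => ?_
  rw [← mul_prod_erase s (fun i => y - v i) ha, nodalWeight, prod_inv_distrib]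
  ring

end PartialFractions

section SimpleZeros

variable {c p g' : ℂ} {R : ℝ} {f g : ℂ → ℂ}

theorem apply_ne_zero_of_mem_sphere (hp : p ∈ ball c R)
    (hzero : ∀ z ∈ closedBall c R, g z = 0 → z = p) {z : ℂ} (hz : z ∈ sphere c R) : g z ≠ 0 :=
  fun h => (mem_ball.1 hp).ne (hzero z (sphere_subset_closedBall hz) h ▸ mem_sphere.1 hz)

theorem circleIntegral_div_eq_of_simple_zero (hp : p ∈ ball c R)
    (hf : DifferentiableOn ℂ f (closedBall c R)) (hg : DifferentiableOn ℂ g (closedBall c R))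
    (hgp : g p = 0) (hg' : HasDerivAt g g' p) (hg'0 : g' ≠ 0)
    (hzero : ∀ z ∈ closedBall c R, g z = 0 → z = p) :
    ∮ z in C(c, R), f z / g z = 2 * Real.pi * I * (f p / g') := by
  set q := dslope g p
  have hq : DifferentiableOn ℂ q (closedBall c R) :=
    (differentiableOn_dslope (closedBall_mem_nhds_of_mem hp)).2 hg
  have hgq : ∀ z, g z = (z - p) * q z := fun z => by
    rw [← smul_eq_mul, sub_smul_dslope, hgp, sub_zero]
  have hqp : q p = g' := by simp only [q, dslope_same, hg'.deriv]
  have hq0 : ∀ z ∈ closedBall c R, q z ≠ 0 := by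
    intro z hz hqz
    obtain rfl : z = p := hzero z hz (by rw [hgq, hqz, mul_zero])
    exact hg'0 (hqp ▸ hqz)
  have hfq : ∀ z, f z / g z = (z - p)⁻¹ • (f z / q z) := fun z => by
    rw [hgq, smul_eq_mul, mul_comm (z - p), ← div_div, div_eq_inv_mul]
  simp_rw [hfq]
  rw [(hf.fun_div hq hq0).circleIntegral_sub_inv_smul hp, hqp, smul_eq_mul]

end SimpleZeros

theorem circleIntegral_sum_div_eq_of_simple_zeros {c : ℂ} {R : ℝ} {ι : Type*} {s : Finset ι}
    {p g' : ι → ℂ} {f g : ι → ℂ → ℂ} (hp : ∀ a, p a ∈ ball c R)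
    (hf : ∀ a, DifferentiableOn ℂ (f a) (closedBall c R))
    (hg : ∀ a, DifferentiableOn ℂ (g a) (closedBall c R)) (hgp : ∀ a, g a (p a) = 0)
    (hg' : ∀ a, HasDerivAt (g a) (g' a) (p a)) (hg'0 : ∀ a, g' a ≠ 0)
    (hzero : ∀ a, ∀ z ∈ closedBall c R, g a z = 0 → z = p a) :
    ∮ z in C(c, R), ∑ a ∈ s, f a z / g a z = 2 * Real.pi * I * ∑ a ∈ s, f a (p a) / g' a := by
  have hint : ∀ a ∈ s, CircleIntegrable (fun z => f a z / g a z) c R := fun a _ =>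
    (((hf a).continuousOn.mono sphere_subset_closedBall).div
      ((hg a).continuousOn.mono sphere_subset_closedBall)
      fun z hz => apply_ne_zero_of_mem_sphere (hp a) (hzero a) hz).circleIntegrable
      (pos_of_mem_ball (hp a)).le
  rw [circleIntegral.integral_fun_sum hint, mul_sum]
  exact sum_congr rfl fun a _ =>
    circleIntegral_div_eq_of_simple_zero (hp a) (hf a) (hg a) (hgp a) (hg' a) (hg'0 a) (hzero a)

/-- Residue evaluation of the contour integral
`(1/(2πi)) ∮_{|z-c₀|=R} (α/(e^{(w-z)α}-1)) e^{zu} ∏_i (e^{wα}-e^{ℓ_iα})/(e^{zα}-e^{ℓ_iα}) dz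
 = ∑_a e^{ℓ_a u} ∏_{i ≠ a} (e^{wα}-e^{ℓ_iα})/(e^{ℓ_aα}-e^{ℓ_iα})`. -/
theorem statement5 (N : ℕ) (hN : 1 ≤ N) (l : Fin N → ℝ)
    (α : ℂ) (hα : α ≠ 0) (u w : ℂ)
    (hinj : Function.Injective fun a : Fin N => Complex.exp ((l a : ℂ) * α))
    (c₀ : ℂ) (R : ℝ) (hR : 0 < R)
    (h1 : ∀ a : Fin N, ‖(l a : ℂ) - c₀‖ < R)
    (h2 : ∀ (a : Fin N) (z : ℂ), ‖z - c₀‖ ≤ R →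
      Complex.exp (z * α) = Complex.exp ((l a : ℂ) * α) → z = (l a : ℂ))
    (h3 : ∀ z : ℂ, ‖z - c₀‖ ≤ R → Complex.exp ((w - z) * α) ≠ 1) :
    (1 / (2 * (Real.pi : ℂ) * Complex.I)) *
        (∮ z in C(c₀, R),
          (α / (Complex.exp ((w - z) * α) - 1)) * Complex.exp (z * u) *
            ∏ i : Fin N,
              (Complex.exp (w * α) - Complex.exp ((l i : ℂ) * α)) /
                (Complex.exp (z * α) - Complex.exp ((l i : ℂ) * α))) =
      ∑ a : Fin N, Complex.exp ((l a : ℂ) * u) *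
        ∏ i ∈ Finset.univ.erase a,
          (Complex.exp (w * α) - Complex.exp ((l i : ℂ) * α)) /
            (Complex.exp ((l a : ℂ) * α) - Complex.exp ((l i : ℂ) * α)) := by
  set E : Fin N → ℂ := fun i => exp (l i * α)
  set W := exp (w * α)
  set Q : Fin N → ℂ := fun a => ∏ i ∈ univ.erase a, (W - E i) / (E a - E i)
  set F : Fin N → ℂ → ℂ := fun a z =>
    α / (exp ((w - z) * α) - 1) * exp (z * u) * ((W - E a) * Q a)
  have hball : ∀ a, (l a : ℂ) ∈ ball c₀ R := fun a => mem_ball_iff_norm.2 (h1 a)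
  have hzero : ∀ a, ∀ z ∈ closedBall c₀ R, exp (z * α) - E a = 0 → z = l a := fun a z hz h =>
    h2 a z (mem_closedBall_iff_norm.1 hz) (sub_eq_zero.1 h)
  have hF : ∀ a, DifferentiableOn ℂ (F a) (closedBall c₀ R) := fun a =>
    ((differentiableOn_const α).div (by fun_prop) fun z hz =>
      sub_ne_zero.2 (h3 z (mem_closedBall_iff_norm.1 hz))).mul (by fun_prop) |>.mul
      (differentiableOn_const _)
  have hsplit : Set.EqOn
      (fun z => α / (exp ((w - z) * α) - 1) * exp (z * u) * ∏ i, (W - E i) / (exp (z * α) - E i))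
      (fun z => ∑ a, F a z / (exp (z * α) - E a)) (sphere c₀ R) := fun z hz => by
    simp only [prod_div_sub_eq_sum_div_sub (fun a _ b _ h => hinj h) (univ_nonempty_iff.2 ⟨⟨0, hN⟩⟩)
      (fun a _ => sub_ne_zero.1 (apply_ne_zero_of_mem_sphere (hball a) (hzero a) hz)),
      mul_sum, F, Q, mul_div_assoc]
  have hval : ∀ a, F a (l a) / (E a * α) = exp (l a * u) * Q a := fun a => by
    have hEa : E a ≠ 0 := exp_ne_zero _
    have hexp : exp ((w - l a) * α) = W / E a := by rw [sub_mul, exp_sub]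
    have hWE : W - E a ≠ 0 := fun h => h3 (l a) (h1 a).le <| by
      rw [hexp]; exact (div_eq_one_iff_eq hEa).2 (sub_eq_zero.1 h)
    simp only [F, hexp]
    field_simp
  have hderiv : ∀ a, HasDerivAt (fun z => exp (z * α) - E a) (E a * α) (l a) := fun a => by
    simpa using ((hasDerivAt_id (l a : ℂ)).mul_const α).cexp.sub_const (E a)
  rw [circleIntegral.integral_congr hR.le hsplit,
    circleIntegral_sum_div_eq_of_simple_zeros hball hF (fun a => by fun_prop)
      (fun a => sub_self (E a)) hderiv (fun a => mul_ne_zero (exp_ne_zero _) hα) hzero,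
    one_div, inv_mul_cancel_left₀ two_pi_I_ne_zero]
  exact sum_congr rfl fun a _ => hval a
end

section
/- Let N ≥ 1, let λ ∈ ℤ^N with λ₁ ≥ λ₂ ≥ ⋯ ≥ λ_N, let x₁, …, x_N ∈ ℂ ∖ {0} be pairwise distinct, and let q ∈ ℂ ∖ {0} be such that q·x_i ≠ x_j for all i ≠ j. Then ∑_{i=1}^N ∏_{j ≠ i} ((q x_i − x_j)/(x_i − x_j)) · s_λ(x₁, …, x_{i−1}, q x_i, x_{i+1}, …, x_N) = ( ∑_{j=1}^N q^{λ_j + N − j} ) · s_λ(x₁, …, x_N). -/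
/-!
Multiplying `s_λ(x₁, …, q xᵢ, …, x_N)` by `∏_{j ≠ i} (q xᵢ - x_j)/(xᵢ - x_j)` exactly compensates
the change of the Vandermonde denominator, so the `i`-th summand is `det Aᵢ / Δ(x)`, where
`A = (x_k ^ μ_j)` with `μ_j = λ_j + N - j` and `Aᵢ` is `A` with its `i`-th row scaled entrywise
by `q ^ μ_j`. Expanding `det Aᵢ` along row `i` by the adjugate and summing over `i` gives
`∑_j q ^ μ_j (adj A · A)_{jj} = (∑_j q ^ μ_j) det A`.
-/

open Complex Finset Filter Topology

noncomputable section

/-- The rational Schur function `s_λ(w) = det(w_i^{λ_j + N - j}) / Δ(w)`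
(0-indexed exponent `λ_j + N - 1 - j`, integer powers). -/
def schurFun (N : ℕ) (lam : Fin N → ℤ) (w : Fin N → ℂ) : ℂ :=
  (Matrix.of fun i j : Fin N =>
    w i ^ (lam j + (N : ℤ) - 1 - ((j : ℕ) : ℤ))).det / vprod w

namespace Matrix

variable {n R : Type*} [Fintype n] [DecidableEq n] [CommRing R]

theorem det_updateRow_eq_sum_adjugate (A : Matrix n n R) (i : n) (v : n → R) :
    (A.updateRow i v).det = ∑ k, A.adjugate k i * v k := by
  rw [← cramer_transpose_apply, cramer_eq_adjugate_mulVec, ← adjugate_transpose]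
  rfl

theorem sum_det_updateRow_mul_row (A : Matrix n n R) (d : n → R) :
    ∑ i, (A.updateRow i fun j => d j * A i j).det = (∑ j, d j) * A.det := by
  simp_rw [det_updateRow_eq_sum_adjugate]
  rw [Finset.sum_comm, Finset.sum_mul]
  refine Finset.sum_congr rfl fun k _ => ?_
  have hdiag : ∑ i, A.adjugate k i * A i k = A.det := by
    simpa [mul_apply] using congr_fun (congr_fun (adjugate_mul A) k) k
  rw [← hdiag, Finset.mul_sum]
  exact Finset.sum_congr rfl fun i _ => by ring

end Matrix

section Vandermonde

variable {N : ℕ}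

theorem vprod_eq_mul_prod_erase (w : Fin N → ℂ) (i : Fin N) :
    vprod w = (∏ j ∈ univ.erase i,
        (if i < j then w i - w j else 1) * (if j < i then w j - w i else 1)) *
      ∏ a ∈ univ.erase i, ∏ b ∈ univ.erase i, if a < b then w a - w b else 1 := by
  have hrow : ∀ a, (∏ b, if a < b then w a - w b else 1) =
      (if a < i then w a - w i else 1) * ∏ b ∈ univ.erase i, if a < b then w a - w b else 1 :=
    fun a => (mul_prod_erase univ _ (mem_univ i)).symm
  unfold vprod
  rw [← mul_prod_erase univ _ (mem_univ i), hrow i]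
  simp only [lt_irrefl, if_false, one_mul]
  rw [prod_congr rfl fun a _ => hrow a, prod_mul_distrib, prod_mul_distrib]
  ring

theorem vprod_update (w : Fin N → ℂ) (hw : Function.Injective w) (i : Fin N) (c : ℂ) :
    vprod (Function.update w i c) = (∏ j ∈ univ.erase i, (c - w j) / (w i - w j)) * vprod w := by
  have hrest : (∏ a ∈ univ.erase i, ∏ b ∈ univ.erase i,
      if a < b then Function.update w i c a - Function.update w i c b else 1) =
        ∏ a ∈ univ.erase i, ∏ b ∈ univ.erase i, if a < b then w a - w b else 1 :=
    prod_congr rfl fun a ha => prod_congr rfl fun b hb => by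
      rw [Function.update_of_ne (ne_of_mem_erase ha), Function.update_of_ne (ne_of_mem_erase hb)]
  rw [vprod_eq_mul_prod_erase _ i, vprod_eq_mul_prod_erase w i, hrest, ← mul_assoc]
  congr 1
  rw [← prod_mul_distrib]
  refine prod_congr rfl fun j hj => ?_
  have hji : j ≠ i := ne_of_mem_erase hj
  have hne : w i - w j ≠ 0 := sub_ne_zero.mpr fun h => hji (hw h).symm
  rw [Function.update_self, Function.update_of_ne hji]
  rcases hji.lt_or_gt with h | h
  · simp only [h, not_lt_of_gt h, if_true, if_false]
    field_simp
    ring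
  · simp only [h, not_lt_of_gt h, if_true, if_false]
    field_simp

end Vandermonde

section Schur

variable {N : ℕ}

def schurExponent (N : ℕ) (lam : Fin N → ℤ) (j : Fin N) : ℤ :=
  lam j + (N : ℤ) - 1 - ((j : ℕ) : ℤ)

def powMatrix (μ : Fin N → ℤ) (w : Fin N → ℂ) : Matrix (Fin N) (Fin N) ℂ :=
  Matrix.of fun i j => w i ^ μ j

theorem schurFun_eq (lam : Fin N → ℤ) (w : Fin N → ℂ) :
    schurFun N lam w = (powMatrix (schurExponent N lam) w).det / vprod w :=
  rfl

theorem powMatrix_update_mul (μ : Fin N → ℤ) (w : Fin N → ℂ) (i : Fin N) (q : ℂ) :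
    powMatrix μ (Function.update w i (q * w i)) =
      (powMatrix μ w).updateRow i fun j => q ^ μ j * powMatrix μ w i j := by
  ext k j
  rcases eq_or_ne k i with rfl | hk
  · simp [powMatrix, mul_zpow]
  · simp [powMatrix, hk]

theorem mul_schurFun_update_mul (lam : Fin N → ℤ) (x : Fin N → ℂ) (hx : Function.Injective x)
    (q : ℂ) (i : Fin N) (hqx : ∀ j, i ≠ j → q * x i ≠ x j) :
    (∏ j ∈ univ.erase i, (q * x i - x j) / (x i - x j)) *
        schurFun N lam (Function.update x i (q * x i)) =
      ((powMatrix (schurExponent N lam) x).updateRow i fun j =>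
          q ^ schurExponent N lam j * powMatrix (schurExponent N lam) x i j).det / vprod x := by
  have hratio : ∏ j ∈ univ.erase i, (q * x i - x j) / (x i - x j) ≠ 0 :=
    prod_ne_zero_iff.mpr fun j hj =>
      div_ne_zero (sub_ne_zero.mpr (hqx j (ne_of_mem_erase hj).symm))
        (sub_ne_zero.mpr fun h => ne_of_mem_erase hj (hx h).symm)
  rw [schurFun_eq, powMatrix_update_mul, vprod_update x hx, ← mul_div_assoc,
    mul_div_mul_left _ _ hratio]

end Schur

theorem statement9_general (N : ℕ) (lam : Fin N → ℤ)
    (x : Fin N → ℂ) (hx : Function.Injective x)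
    (q : ℂ) (hqx : ∀ i j : Fin N, i ≠ j → q * x i ≠ x j) :
    ∑ i : Fin N,
        (∏ j ∈ Finset.univ.erase i, (q * x i - x j) / (x i - x j)) *
          schurFun N lam (Function.update x i (q * x i)) =
      (∑ j : Fin N, q ^ (lam j + (N : ℤ) - 1 - ((j : ℕ) : ℤ))) * schurFun N lam x := by
  rw [sum_congr rfl fun i _ => mul_schurFun_update_mul lam x hx q i (hqx i), ← sum_div,
    Matrix.sum_det_updateRow_mul_row, schurFun_eq, mul_div_assoc]
  rfl

/-- Eigenrelation for the rational Schur function: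
`∑_i ∏_{j≠i} ((q x_i − x_j)/(x_i − x_j)) s_λ(x with x_i ↦ q x_i)
 = (∑_j q^{λ_j + N - j}) s_λ(x)`. -/
theorem statement9 (N : ℕ) (hN : 1 ≤ N) (lam : Fin N → ℤ) (hlam : Antitone lam)
    (x : Fin N → ℂ) (hx : Function.Injective x) (hx0 : ∀ i, x i ≠ 0)
    (q : ℂ) (hq : q ≠ 0) (hqx : ∀ i j : Fin N, i ≠ j → q * x i ≠ x j) :
    ∑ i : Fin N,
        (∏ j ∈ Finset.univ.erase i, (q * x i - x j) / (x i - x j)) *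
          schurFun N lam (Function.update x i (q * x i)) =
      (∑ j : Fin N, q ^ (lam j + (N : ℤ) - 1 - ((j : ℕ) : ℤ))) * schurFun N lam x :=
  statement9_general N lam x hx q hqx
end
end

section
/- Let μ be a Borel probability measure on ℝ with compact support, which is not a single point mass (i.e., μ is not a Dirac measure), and let E₋ and E₊ denote the infimum and supremum of supp μ. Define h(z) := (∫ (z − x)^{−1} dμ(x))² / (∫ (z − x)^{−2} dμ(x)) for real z ∉ [E₋, E₊] (this equals −G_μ(z)²/G_μ′(z)). Then h is strictly increasing on (E₊, ∞), strictly decreasing on (−∞, E₋), and h(z) → 1 as z → +∞ and as z → −∞. -/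
/-!
For `z` to the right of the support write `Gₙ(z) = ∫ (z - x)⁻ⁿ dμ`, so that `Gₙ' = -n Gₙ₊₁` and
`h = G₁² / G₂` has derivative `2 G₁ (G₁ G₃ - G₂²) / G₂²`. The bracket is positive by a strict
Cauchy–Schwarz inequality, which is strict because `μ` is not a point mass. As `z → ∞`,
`z (z - x)⁻¹ → 1` boundedly, so `z G₁ → 1` and `z² G₂ → 1`, whence `h → 1`. The left half of the
line is reduced to the right half by reflecting `μ` through the origin.
-/

open MeasureTheory Filter Topology

noncomputable section

/-- The (topological) support of a measure on `ℝ`: the set of points all of whose open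
neighborhoods have positive measure. -/
def msupp (μ : Measure ℝ) : Set ℝ :=
  {x : ℝ | ∀ U : Set ℝ, IsOpen U → x ∈ U → 0 < μ U}

section Support

variable {μ : Measure ℝ}

lemma ae_mem_msupp : ∀ᵐ x ∂μ, x ∈ msupp μ := by
  refine measure_null_of_locally_null _ fun x hx => ?_
  obtain ⟨U, hU, hxU, hμU⟩ : ∃ U, IsOpen U ∧ x ∈ U ∧ ¬ 0 < μ U := by
    simpa [msupp] using hx
  exact ⟨U, mem_nhdsWithin_of_mem_nhds (hU.mem_nhds hxU), nonpos_iff_eq_zero.1 (not_lt.1 hμU)⟩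

lemma ae_le_sSup_msupp (h : BddAbove (msupp μ)) : ∀ᵐ x ∂μ, x ≤ sSup (msupp μ) :=
  ae_mem_msupp.mono fun _ hx => le_csSup h hx

lemma ae_sInf_msupp_le (h : BddBelow (msupp μ)) : ∀ᵐ x ∂μ, sInf (msupp μ) ≤ x :=
  ae_mem_msupp.mono fun _ hx => csInf_le h hx

lemma not_ae_eq_of_ne_dirac [IsProbabilityMeasure μ] (hμ : ∀ a, μ ≠ Measure.dirac a) (a : ℝ) :
    ¬ ∀ᵐ x ∂μ, x = a := fun h =>
  hμ a <| by simpa using (ProbabilityTheory.hasLaw_dirac_of_ae_eq (X := id) h).map_eq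

end Support

def invMoment (μ : Measure ℝ) (n : ℕ) (z : ℝ) : ℝ := ∫ x, (z - x)⁻¹ ^ n ∂μ

def cauchyRatio (μ : Measure ℝ) (z : ℝ) : ℝ :=
  (∫ x, (z - x)⁻¹ ∂μ) ^ 2 / ∫ x, ((z - x) ^ 2)⁻¹ ∂μ

lemma cauchyRatio_eq (μ : Measure ℝ) (z : ℝ) :
    cauchyRatio μ z = invMoment μ 1 z ^ 2 / invMoment μ 2 z := by
  simp only [cauchyRatio, invMoment, pow_one, inv_pow]

section RightOfSupport

variable {μ : Measure ℝ} {E z : ℝ}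

lemma integrable_inv_sub_pow [IsFiniteMeasure μ] (hE : ∀ᵐ x ∂μ, x ≤ E) (hz : E < z) (n : ℕ) :
    Integrable (fun x => (z - x)⁻¹ ^ n) μ := by
  refine Integrable.mono' (integrable_const ((z - E)⁻¹ ^ n)) (by fun_prop) ?_
  filter_upwards [hE] with x hx
  rw [norm_pow, Real.norm_of_nonneg (inv_nonneg.2 (by linarith))]
  exact pow_le_pow_left₀ (inv_nonneg.2 (by linarith)) (inv_anti₀ (by linarith) (by linarith)) n

lemma invMoment_pos [IsFiniteMeasure μ] [NeZero μ] (hE : ∀ᵐ x ∂μ, x ≤ E) (hz : E < z) (n : ℕ) :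
    0 < invMoment μ n z := by
  have hpos : ∀ᵐ x ∂μ, 0 < (z - x)⁻¹ ^ n :=
    hE.mono fun x hx => pow_pos (inv_pos.2 (by linarith)) n
  rw [invMoment, integral_pos_iff_support_of_nonneg_ae (hpos.mono fun _ hx => hx.le)
    (integrable_inv_sub_pow hE hz n)]
  refine pos_iff_ne_zero.2 fun h0 => ?_
  have : (ae μ).NeBot := ae_neBot.2 (NeZero.ne μ)
  obtain ⟨x, hx, hx'⟩ := (hpos.and (measure_eq_zero_iff_ae_notMem.1 h0)).exists
  exact hx' hx.ne'

lemma hasDerivAt_inv_sub_pow {w x : ℝ} (hwx : w ≠ x) (n : ℕ) :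
    HasDerivAt (fun w => (w - x)⁻¹ ^ n) (-n * (w - x)⁻¹ ^ (n + 1)) w := by
  refine (((hasDerivAt_id' w).sub_const x).fun_inv (sub_ne_zero.2 hwx)).fun_pow n
    |>.congr_deriv ?_
  rcases n with _ | n
  · simp
  · rw [neg_div, one_div, ← inv_pow, Nat.cast_succ, add_tsub_cancel_right]
    ring

lemma hasDerivAt_invMoment [IsFiniteMeasure μ] (hE : ∀ᵐ x ∂μ, x ≤ E) (hz : E < z) (n : ℕ) :
    HasDerivAt (invMoment μ n) (-n * invMoment μ (n + 1) z) z := by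
  set ε := (z - E) / 2
  have hε : 0 < ε := by simp only [ε]; linarith
  have hball : ∀ᵐ x ∂μ, ∀ w ∈ Metric.ball z ε, ε < w - x := by
    filter_upwards [hE] with x hx w hw
    have := (abs_lt.1 (Real.dist_eq w z ▸ Metric.mem_ball.1 hw)).1
    simp only [ε] at *
    linarith
  have key := hasDerivAt_integral_of_dominated_loc_of_deriv_le (μ := μ)
    (F := fun w x => (w - x)⁻¹ ^ n) (F' := fun w x => -n * (w - x)⁻¹ ^ (n + 1))
    (bound := fun _ => n * ε⁻¹ ^ (n + 1)) (Metric.ball_mem_nhds z hε)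
    (Eventually.of_forall fun w => by fun_prop)
    (integrable_inv_sub_pow hE hz n) (by fun_prop) ?_ (integrable_const _) ?_
  · have := key.2
    rwa [integral_const_mul] at this
  · filter_upwards [hball] with x hx w hw
    have := hx w hw
    rw [norm_mul, norm_neg, Real.norm_natCast, norm_pow,
      Real.norm_of_nonneg (inv_nonneg.2 (by linarith))]
    exact mul_le_mul_of_nonneg_left (pow_le_pow_left₀ (inv_nonneg.2 (by linarith))
      (inv_anti₀ hε this.le) _) n.cast_nonneg
  · filter_upwards [hball] with x hx w hw
    exact hasDerivAt_inv_sub_pow (by linarith [hx w hw]) n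

lemma invMoment_two_sq_lt [IsFiniteMeasure μ] [NeZero μ] (hE : ∀ᵐ x ∂μ, x ≤ E) (hz : E < z)
    (hμ : ∀ a, ¬ ∀ᵐ x ∂μ, x = a) :
    invMoment μ 2 z ^ 2 < invMoment μ 1 z * invMoment μ 3 z := by
  -- `G₁ G₃ - G₂² = G₁ ∫ u (u - c)² dμ` for `u = (z - x)⁻¹`, and `u = c` holds at one point only.
  set c := invMoment μ 2 z / invMoment μ 1 z
  have hint := integrable_inv_sub_pow hE hz
  have hG₁ := invMoment_pos hE hz 1
  have hpoly : (fun x => (z - x)⁻¹ * ((z - x)⁻¹ - c) ^ 2) =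
      fun x => (z - x)⁻¹ ^ 3 - 2 * c * (z - x)⁻¹ ^ 2 + c ^ 2 * (z - x)⁻¹ ^ 1 := by
    ext x; ring
  have hexpand : ∫ x, (z - x)⁻¹ * ((z - x)⁻¹ - c) ^ 2 ∂μ =
      invMoment μ 3 z - 2 * c * invMoment μ 2 z + c ^ 2 * invMoment μ 1 z := by
    rw [hpoly, integral_add (by fun_prop) (by fun_prop), integral_sub (by fun_prop) (by fun_prop),
      integral_const_mul, integral_const_mul]
    rfl
  have hnonneg : 0 ≤ᵐ[μ] fun x => (z - x)⁻¹ * ((z - x)⁻¹ - c) ^ 2 :=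
    hE.mono fun x hx => mul_nonneg (inv_nonneg.2 (by linarith)) (sq_nonneg _)
  have hpos : 0 < ∫ x, (z - x)⁻¹ * ((z - x)⁻¹ - c) ^ 2 ∂μ := by
    refine (integral_nonneg_of_ae hnonneg).lt_of_ne fun h0 => hμ (z - c⁻¹) ?_
    have hint' : Integrable (fun x => (z - x)⁻¹ * ((z - x)⁻¹ - c) ^ 2) μ := by
      rw [hpoly]; fun_prop
    filter_upwards [(integral_eq_zero_iff_of_nonneg_ae hnonneg hint').1 h0.symm, hE] with x hx hxE
    have hu : (z - x)⁻¹ ≠ 0 := inv_ne_zero (by linarith)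
    have : (z - x)⁻¹ = c := by simpa [hu, sub_eq_zero] using hx
    rw [← this, inv_inv]
    ring
  have hcG : c * invMoment μ 1 z = invMoment μ 2 z := div_mul_cancel₀ _ hG₁.ne'
  nlinarith [mul_pos hG₁ hpos]

theorem strictMonoOn_cauchyRatio [IsFiniteMeasure μ] [NeZero μ] (hE : ∀ᵐ x ∂μ, x ≤ E)
    (hμ : ∀ a, ¬ ∀ᵐ x ∂μ, x = a) : StrictMonoOn (cauchyRatio μ) (Set.Ioi E) := by
  have hderiv : ∀ z ∈ Set.Ioi E, HasDerivAt (cauchyRatio μ)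
      (2 * invMoment μ 1 z * (invMoment μ 1 z * invMoment μ 3 z - invMoment μ 2 z ^ 2) /
        invMoment μ 2 z ^ 2) z := by
    intro z hz
    rw [funext (cauchyRatio_eq μ)]
    refine ((hasDerivAt_invMoment hE hz 1).fun_pow 2).fun_div (hasDerivAt_invMoment hE hz 2)
      (invMoment_pos hE hz 2).ne' |>.congr_deriv ?_
    push_cast
    ring
  refine strictMonoOn_of_deriv_pos (convex_Ioi E)
    (fun z hz => (hderiv z hz).continuousAt.continuousWithinAt) fun z hz => ?_
  rw [interior_Ioi] at hz
  rw [(hderiv z hz).deriv]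
  have hG₁ := invMoment_pos hE hz 1
  have hG₂ := invMoment_pos hE hz 2
  have hCS := invMoment_two_sq_lt hE hz hμ
  exact div_pos (mul_pos (mul_pos two_pos hG₁) (sub_pos.2 hCS)) (pow_pos hG₂ 2)

lemma tendsto_mul_inv_sub_atTop (x : ℝ) : Tendsto (fun z => z * (z - x)⁻¹) atTop (𝓝 1) := by
  have h : Tendsto (fun z => 1 - x * z⁻¹) atTop (𝓝 1) := by
    simpa using tendsto_const_nhds.sub (tendsto_inv_atTop_zero.const_mul x)
  have h' := h.inv₀ one_ne_zero
  rw [inv_one] at h'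
  refine h'.congr' ?_
  filter_upwards [eventually_gt_atTop (max 0 x)] with z hz
  have hz0 : z ≠ 0 := (lt_of_le_of_lt (le_max_left _ _) hz).ne'
  have hzx : z - x ≠ 0 := sub_ne_zero.2 (lt_of_le_of_lt (le_max_right _ _) hz).ne'
  field_simp

lemma tendsto_pow_mul_invMoment_atTop [IsProbabilityMeasure μ] (hE : ∀ᵐ x ∂μ, x ≤ E) (n : ℕ) :
    Tendsto (fun z => z ^ n * invMoment μ n z) atTop (𝓝 1) := by
  have hbound : ∀ᶠ z in atTop, ∀ᵐ x ∂μ, ‖(z * (z - x)⁻¹) ^ n‖ ≤ 2 ^ n := by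
    filter_upwards [eventually_ge_atTop (max (2 * E) 1)] with z hz
    filter_upwards [hE] with x hx
    have h2E : 2 * E ≤ z := le_of_max_le_left hz
    have hz1 : 1 ≤ z := le_of_max_le_right hz
    have hzx : 0 < z - x := by linarith
    rw [norm_pow, Real.norm_of_nonneg (by positivity)]
    refine pow_le_pow_left₀ (by positivity) ?_ n
    rw [← div_eq_mul_inv, div_le_iff₀ hzx]
    linarith
  have h := tendsto_integral_filter_of_dominated_convergence (μ := μ)
    (F := fun z x => (z * (z - x)⁻¹) ^ n) (f := fun _ => (1 : ℝ)) (fun _ => (2 : ℝ) ^ n)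
    (Eventually.of_forall fun z => by fun_prop) hbound (integrable_const _)
    (ae_of_all _ fun x => by simpa using (tendsto_mul_inv_sub_atTop x).pow n)
  simp only [integral_const, probReal_univ, smul_eq_mul, mul_one] at h
  refine h.congr fun z => ?_
  simp only [mul_pow, integral_const_mul, invMoment]

theorem tendsto_cauchyRatio_atTop [IsProbabilityMeasure μ] (hE : ∀ᵐ x ∂μ, x ≤ E) :
    Tendsto (cauchyRatio μ) atTop (𝓝 1) := by
  have h := ((tendsto_pow_mul_invMoment_atTop hE 1).pow 2).div
    (tendsto_pow_mul_invMoment_atTop hE 2) one_ne_zero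
  rw [one_pow, div_one] at h
  refine h.congr' ?_
  filter_upwards [eventually_gt_atTop 0] with z hz
  simp only [cauchyRatio_eq, Pi.div_apply, pow_one, mul_pow]
  exact mul_div_mul_left _ _ (pow_ne_zero 2 hz.ne')

end RightOfSupport

lemma cauchyRatio_map_neg (μ : Measure ℝ) (z : ℝ) :
    cauchyRatio (μ.map Neg.neg) z = cauchyRatio μ (-z) := by
  have h₁ : ∫ x, (-z - x)⁻¹ ∂μ = -∫ x, (z - -x)⁻¹ ∂μ := by
    rw [← integral_neg]
    congr 1 with x
    rw [← inv_neg]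
    ring
  have h₂ : ∫ x, ((-z - x) ^ 2)⁻¹ ∂μ = ∫ x, ((z - -x) ^ 2)⁻¹ ∂μ := by
    congr 1 with x
    ring
  simp only [cauchyRatio, measurableEmbedding_neg.integral_map, h₁, h₂, neg_sq]

/-- For a compactly supported probability measure `μ` on `ℝ` which is
not a point mass, the function `h(z) = (∫ (z-x)⁻¹ dμ)² / ∫ (z-x)⁻² dμ` is strictly
increasing on `(E₊, ∞)`, strictly decreasing on `(−∞, E₋)`, and tends to `1` at `±∞`. -/
theorem statement11 (μ : Measure ℝ) [IsProbabilityMeasure μ]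
    (hcompact : IsCompact (msupp μ))
    (hnotdirac : ∀ a : ℝ, μ ≠ Measure.dirac a) :
    let h : ℝ → ℝ := fun z => (∫ x, (z - x)⁻¹ ∂μ) ^ 2 / ∫ x, ((z - x) ^ 2)⁻¹ ∂μ
    StrictMonoOn h (Set.Ioi (sSup (msupp μ))) ∧
      StrictAntiOn h (Set.Iio (sInf (msupp μ))) ∧
      Tendsto h atTop (𝓝 1) ∧ Tendsto h atBot (𝓝 1) := by
  intro h
  change StrictMonoOn (cauchyRatio μ) _ ∧ StrictAntiOn (cauchyRatio μ) _ ∧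
    Tendsto (cauchyRatio μ) atTop _ ∧ Tendsto (cauchyRatio μ) atBot _
  set ν := μ.map Neg.neg
  have : IsProbabilityMeasure ν := Measure.isProbabilityMeasure_map measurable_neg.aemeasurable
  have hsup := ae_le_sSup_msupp hcompact.bddAbove
  have hinf : ∀ᵐ y ∂ν, y ≤ -sInf (msupp μ) := measurableEmbedding_neg.ae_map_iff.2 <|
    (ae_sInf_msupp_le hcompact.bddBelow).mono fun _ hx => neg_le_neg hx
  have hμ := not_ae_eq_of_ne_dirac hnotdirac
  have hν : ∀ a, ¬ ∀ᵐ y ∂ν, y = a := fun a hν => hμ (-a) <|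
    (measurableEmbedding_neg.ae_map_iff.1 hν).mono fun _ hx => neg_eq_iff_eq_neg.1 hx
  have hreflect : cauchyRatio μ = cauchyRatio ν ∘ Neg.neg := by
    ext z
    simp [ν, cauchyRatio_map_neg]
  refine ⟨strictMonoOn_cauchyRatio hsup hμ, ?_, tendsto_cauchyRatio_atTop hsup, ?_⟩
  · rw [hreflect]
    exact (strictMonoOn_cauchyRatio hinf hν).comp_strictAntiOn
      (fun _ _ _ _ hab => neg_lt_neg hab) fun _ hz => Set.mem_Ioi.2 (neg_lt_neg hz)
  · rw [hreflect]
    exact (tendsto_cauchyRatio_atTop hinf).comp tendsto_neg_atBot_atTop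
end
end

section
/- Let μ be a Borel probability measure on ℝ with compact support, and let E₋ and E₊ denote the infimum and supremum of supp μ. If z₀ ∈ ℂ ∖ supp μ satisfies dist(z₀, supp μ) ≥ 4(E₊ − E₋), then ∫ (z₀ − x)^{−2} dμ(x) ≠ 0 (equivalently, the derivative of the Cauchy transform G_μ at z₀ is nonzero). -/
open MeasureTheory Filter Topology

noncomputable section

/-!
Let `a` be the midpoint of `[E₋, E₊]` and `Δ = E₊ − E₋`. Every `x ∈ supp μ` lies within `Δ / 2`
of `a`, while `|z₀ − a| ≥ 4Δ − Δ / 2 = 7Δ / 2`; so `(z₀ − a)² / (z₀ − x)²` stays in the closed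
disc of radius `1 / 2` about `1`. Averaging over `μ`, so does `(z₀ − a)² ∫ (z₀ − x)⁻² dμ`, which
therefore cannot vanish.
-/

theorem msupp_eq_support (μ : Measure ℝ) : msupp μ = μ.support := by
  rw [Measure.support_eq_forall_isOpen]
  exact Set.ext fun _ => forall_congr' fun _ => forall_comm

theorem integral_ne_zero_of_ae_dist_le {α E : Type*} [MeasurableSpace α]
    [NormedAddCommGroup E] [NormedSpace ℝ E] [CompleteSpace E] {μ : Measure α}
    [IsProbabilityMeasure μ] {f : α → E} (hf : AEStronglyMeasurable f μ) {w : E} {ρ : ℝ}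
    (hρ : ρ < ‖w‖) (h : ∀ᵐ x ∂μ, dist (f x) w ≤ ρ) : ∫ x, f x ∂μ ≠ 0 := by
  have hint : Integrable f μ := Integrable.of_bound hf (ρ + ‖w‖) <| h.mono fun x hx => by
    simpa only [dist_zero_right] using (dist_triangle (f x) w 0).trans (by simpa using hx)
  have hdist : dist (∫ x, f x ∂μ) w ≤ ρ := by
    have hsub : ∫ x, f x - w ∂μ = ∫ x, f x ∂μ - w := by
      rw [integral_sub hint (integrable_const w), integral_const, probReal_univ, one_smul]
    rw [dist_eq_norm, ← hsub]
    simpa using norm_integral_le_of_norm_le_const (μ := μ) (by simpa only [dist_eq_norm] using h)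
  intro h0
  rw [h0, dist_zero_left] at hdist
  linarith

theorem dist_sq_mul_inv_sq_one_le_half {𝕜 : Type*} [NormedField 𝕜] {z a x : 𝕜} (hza : z ≠ a)
    (hx : 7 * dist x a ≤ dist z a) : dist ((z - a) ^ 2 * ((z - x) ^ 2)⁻¹) 1 ≤ 1 / 2 := by
  set δ := dist x a
  set r := dist z a
  set s := dist z x
  have hr : 0 < r := dist_pos.2 hza
  have hδ : 0 ≤ δ := dist_nonneg
  have hrs : r ≤ s + δ := dist_triangle z x a
  have hsr : s ≤ r + δ := dist_triangle_right z x a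
  have hs : 0 < s := by linarith
  have hnum : dist ((z - a) ^ 2) ((z - x) ^ 2) ≤ δ * (r + s) := by
    rw [dist_eq_norm, show (z - a) ^ 2 - (z - x) ^ 2 = (x - a) * ((z - a) + (z - x)) by ring,
      norm_mul, ← dist_eq_norm]
    gcongr
    exact (norm_add_le _ _).trans_eq (by rw [← dist_eq_norm, ← dist_eq_norm])
  have hu : (z - x) ^ 2 ≠ 0 := pow_ne_zero 2 (sub_ne_zero.2 (dist_pos.1 hs))
  rw [dist_eq_norm, ← mul_inv_cancel₀ hu, ← sub_mul, norm_mul, norm_inv, norm_pow,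
    ← dist_eq_norm z x, ← div_eq_mul_inv, div_le_iff₀ (by positivity), ← dist_eq_norm]
  nlinarith

theorem dist_midpoint_le_of_mem_Icc {l u x : ℝ} (hx : x ∈ Set.Icc l u) :
    dist x ((l + u) / 2) ≤ (u - l) / 2 := by
  rw [Real.dist_eq, abs_sub_le_iff]
  constructor <;> linarith [hx.1, hx.2]

theorem infDist_sub_le_dist_midpoint {S : Set ℝ} (hS : IsCompact S) (hne : S.Nonempty) (z : ℂ) :
    Metric.infDist z ((fun x : ℝ => (x : ℂ)) '' S) - (sSup S - sInf S) / 2 ≤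
      dist z ((sInf S + sSup S) / 2 : ℝ) := by
  set a : ℝ := (sInf S + sSup S) / 2
  have hinf : sInf S ∈ S := hS.sInf_mem hne
  have hle : sInf S ≤ sSup S := csInf_le_csSup hne hS.bddBelow hS.bddAbove
  calc Metric.infDist z ((fun x : ℝ => (x : ℂ)) '' S) - (sSup S - sInf S) / 2
      ≤ dist z (sInf S : ℝ) - dist ((sInf S : ℝ) : ℂ) (a : ℂ) := by
        rw [Complex.isometry_ofReal.dist_eq]
        gcongr
        · exact Metric.infDist_le_dist_of_mem (Set.mem_image_of_mem _ hinf)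
        · exact dist_midpoint_le_of_mem_Icc ⟨le_rfl, hle⟩
    _ ≤ dist z a := by linarith [dist_triangle_right z (sInf S : ℝ) a]

/-- If `μ` is a compactly supported probability measure on `ℝ` and
`z₀ ∈ ℂ ∖ supp μ` satisfies `dist(z₀, supp μ) ≥ 4(E₊ − E₋)`, then
`∫ (z₀ − x)⁻² dμ(x) ≠ 0`, i.e. `G_μ′(z₀) ≠ 0`. -/
theorem statement13 (μ : Measure ℝ) [IsProbabilityMeasure μ]
    (hcompact : IsCompact (msupp μ))
    (z₀ : ℂ) (hz₀ : z₀ ∉ (fun x : ℝ => (x : ℂ)) '' msupp μ)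
    (hdist : 4 * (sSup (msupp μ) - sInf (msupp μ)) ≤
      Metric.infDist z₀ ((fun x : ℝ => (x : ℂ)) '' msupp μ)) :
    (∫ x, ((z₀ - (x : ℂ)) ^ 2)⁻¹ ∂μ) ≠ 0 := by
  have hne : (msupp μ).Nonempty := by
    rw [msupp_eq_support]; exact Measure.nonempty_support (NeZero.ne μ)
  have hae : ∀ᵐ x ∂μ, x ∈ msupp μ := by rw [msupp_eq_support]; exact Measure.support_mem_ae
  set S := msupp μ
  set a : ℝ := (sInf S + sSup S) / 2
  have hpos : 0 < Metric.infDist z₀ ((fun x : ℝ => (x : ℂ)) '' S) :=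
    ((hcompact.image Complex.continuous_ofReal).isClosed.notMem_iff_infDist_pos
      (hne.image _)).1 hz₀
  have hfar := infDist_sub_le_dist_midpoint hcompact hne z₀
  have hza : z₀ ≠ a := dist_pos.1 (by linarith)
  have hdisc : ∀ᵐ x : ℝ ∂μ, dist ((z₀ - a) ^ 2 * ((z₀ - x) ^ 2)⁻¹) 1 ≤ 1 / 2 := by
    filter_upwards [hae] with x hx
    refine dist_sq_mul_inv_sq_one_le_half hza ?_
    have hxa := dist_midpoint_le_of_mem_Icc
      ⟨csInf_le hcompact.bddBelow hx, le_csSup hcompact.bddAbove hx⟩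
    rw [Complex.isometry_ofReal.dist_eq]
    linarith
  have hmeas : AEStronglyMeasurable (fun x : ℝ => (z₀ - a) ^ 2 * ((z₀ - x) ^ 2)⁻¹) μ := by
    fun_prop
  have hscaled := integral_ne_zero_of_ae_dist_le hmeas (by norm_num) hdisc
  rw [integral_const_mul] at hscaled
  exact right_ne_zero_of_mul hscaled
end
end
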